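/- For every poset X and every S ∈ Dn(Up(Up X)), one has λ_X(Dn(μ^Up_X)(S)) = μ^Up_{Dn X}(Up(λ_X)(λ_{Up X}(S))); concretely, {T ∈ Dn X | ∀ s ∈ S, (T ∩ ⋃₀ s).Nonempty} equals {T ∈ Dn X | ∃ U ∈ Dn(Up X), (∀ s ∈ S, (U ∩ s).Nonempty) ∧ (∀ u ∈ U, (u ∩ T).Nonempty)}. -/

import Mathlib

/-!
The upper sets meeting a lower set `T` form the largest `U ∈ Dn (Up X)` with `T ∈ λ_X U`.
As `λ_{Up X} S` is upward closed, `T` lies in `μ^Up (Up λ_X (λ_{Up X} S))` exactly when this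
largest `U` lies in `λ_{Up X} S`, which unfolds to `∀ s ∈ S, (T ∩ ⋃₀ s).Nonempty`, the
membership condition of `λ_X (Dn μ^Up_X S)`.
-/

/-- The action of the upset functor `Up` on a map: the upward closure of the image. -/
def UpMap {X Y : Type*} [Preorder X] [Preorder Y] (f : X → Y) (S : UpperSet X) :
    UpperSet Y :=
  upperClosure (f '' (S : Set X))

/-- The action of the downset functor `Dn` on a map: the downward closure of the image. -/
def DnMap {X Y : Type*} [Preorder X] [Preorder Y] (f : X → Y) (S : LowerSet X) :
    LowerSet Y :=
  lowerClosure (f '' (S : Set X))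

/-- The unit of the upset monad: `x ↦ ↑{x}`. -/
def UpUnit {X : Type*} [Preorder X] (x : X) : UpperSet X :=
  UpperSet.Ici x

/-- The unit of the downset monad: `x ↦ ↓{x}`. -/
def DnUnit {X : Type*} [Preorder X] (x : X) : LowerSet X :=
  LowerSet.Iic x

/-- The multiplication of the upset monad: union. -/
def UpMul {X : Type*} [Preorder X] (S : UpperSet (UpperSet X)) : UpperSet X :=
  ⟨{x : X | ∃ s ∈ S, x ∈ s}, by
    rintro a b hab ⟨s, hs, has⟩
    exact ⟨s, hs, s.upper hab has⟩⟩

/-- The multiplication of the downset monad: union. -/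
def DnMul {X : Type*} [Preorder X] (S : LowerSet (LowerSet X)) : LowerSet X :=
  ⟨{x : X | ∃ s ∈ S, x ∈ s}, by
    rintro a b hba ⟨s, hs, has⟩
    exact ⟨s, hs, s.lower hba has⟩⟩

/-- The distributive law `λ_X : Dn (Up X) → Up (Dn X)`,
`S ↦ {T ∈ Dn X | ∀ s ∈ S, s ∩ T ≠ ∅}`. -/
def distLaw {X : Type*} [Preorder X] (S : LowerSet (UpperSet X)) : UpperSet (LowerSet X) :=
  ⟨{T : LowerSet X | ∀ s ∈ S, ((s : Set X) ∩ (T : Set X)).Nonempty}, by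
    intro T T' hTT' h s hs
    exact (h s hs).imp fun x hx => ⟨hx.1, hTT' hx.2⟩⟩

section

variable {X Y : Type*} [Preorder X] [Preorder Y]

theorem mem_distLaw {S : LowerSet (UpperSet X)} {T : LowerSet X} :
    T ∈ distLaw S ↔ ∀ s ∈ S, ((s : Set X) ∩ T).Nonempty :=
  Iff.rfl

theorem coe_upMul (S : UpperSet (UpperSet X)) : (UpMul S : Set X) = ⋃ s ∈ S, (s : Set X) := by
  ext x
  simp only [Set.mem_iUnion, exists_prop]
  rfl

theorem mem_distLaw_dnMap {f : Y → UpperSet X} {S : LowerSet Y} {T : LowerSet X} :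
    T ∈ distLaw (DnMap f S) ↔ ∀ y ∈ S, ((f y : Set X) ∩ T).Nonempty := by
  refine ⟨fun h y hy => h _ (subset_lowerClosure (Set.mem_image_of_mem f hy)), ?_⟩
  rintro h s ⟨_, ⟨y, hy, rfl⟩, hsy⟩
  exact (h y hy).mono (Set.inter_subset_inter_left _ hsy)

theorem mem_upMul_upMap {f : Y → UpperSet X} {S : UpperSet Y} {x : X} :
    x ∈ UpMul (UpMap f S) ↔ ∃ y ∈ S, x ∈ f y := by
  refine ⟨?_, fun ⟨y, hy, hx⟩ => ⟨f y, subset_upperClosure (Set.mem_image_of_mem f hy), hx⟩⟩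
  rintro ⟨t, ⟨_, ⟨y, hy, rfl⟩, hyt⟩, hx⟩
  exact ⟨y, hy, hyt hx⟩

theorem mem_distLaw_dnMap_upMul {S : LowerSet (UpperSet (UpperSet X))} {T : LowerSet X} :
    T ∈ distLaw (DnMap UpMul S) ↔ ∀ s ∈ S, ((T : Set X) ∩ ⋃ u ∈ s, (u : Set X)).Nonempty := by
  simp only [mem_distLaw_dnMap, coe_upMul, Set.inter_comm _ (T : Set X)]

def upperSetsMeeting (T : Set X) : LowerSet (UpperSet X) :=
  ⟨{u | ((u : Set X) ∩ T).Nonempty}, fun _ _ hvu hu => hu.mono (Set.inter_subset_inter_left _ hvu)⟩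

theorem mem_distLaw_iff_le_upperSetsMeeting {U : LowerSet (UpperSet X)} {T : LowerSet X} :
    T ∈ distLaw U ↔ U ≤ upperSetsMeeting T :=
  Iff.rfl

theorem exists_mem_distLaw_mem_distLaw_iff {S : LowerSet (UpperSet (UpperSet X))}
    {T : LowerSet X} : (∃ U ∈ distLaw S, T ∈ distLaw U) ↔ upperSetsMeeting T ∈ distLaw S := by
  simp only [mem_distLaw_iff_le_upperSetsMeeting]
  exact ⟨fun ⟨U, hU, hUT⟩ => (distLaw S).upper hUT hU, fun h => ⟨_, h, le_rfl⟩⟩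

theorem inter_upperSetsMeeting_nonempty_iff (s : UpperSet (UpperSet X)) (T : Set X) :
    ((s : Set (UpperSet X)) ∩ upperSetsMeeting T).Nonempty ↔
      (T ∩ ⋃ u ∈ s, (u : Set X)).Nonempty := by
  constructor
  · rintro ⟨u, hus, x, hxu, hxT⟩
    exact ⟨x, hxT, Set.mem_biUnion hus hxu⟩
  · rintro ⟨x, hxT, hx⟩
    obtain ⟨u, hus, hxu⟩ := Set.mem_iUnion₂.1 hx
    exact ⟨u, hus, x, hxu, hxT⟩

theorem upperSetsMeeting_mem_distLaw {S : LowerSet (UpperSet (UpperSet X))} {T : LowerSet X} :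
    upperSetsMeeting T ∈ distLaw S ↔ ∀ s ∈ S, ((T : Set X) ∩ ⋃ u ∈ s, (u : Set X)).Nonempty := by
  simp only [mem_distLaw, inter_upperSetsMeeting_nonempty_iff]

end

/-- The multiplication law of the distributive law for `μ^Up`:
`λ_X (Dn(μ^Up_X) S) = μ^Up_{Dn X} (Up(λ_X) (λ_{Up X} S))`, and concretely
`{T ∈ Dn X | ∀ s ∈ S, (T ∩ ⋃₀ s).Nonempty}` equals
`{T ∈ Dn X | ∃ U ∈ Dn(Up X), (∀ s ∈ S, (U ∩ s).Nonempty) ∧ (∀ u ∈ U, (u ∩ T).Nonempty)}`. -/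
theorem distLaw_upMul {X : Type*} [PartialOrder X] (S : LowerSet (UpperSet (UpperSet X))) :
    distLaw (DnMap (UpMul (X := X)) S) = UpMul (UpMap (distLaw (X := X)) (distLaw S)) ∧
    (distLaw (DnMap (UpMul (X := X)) S) : Set (LowerSet X))
      = {T : LowerSet X | ∀ s ∈ S, ((T : Set X) ∩ ⋃ u ∈ (s : Set (UpperSet X)), (u : Set X)).Nonempty} ∧
    (distLaw (DnMap (UpMul (X := X)) S) : Set (LowerSet X))
      = {T : LowerSet X | ∃ U : LowerSet (UpperSet X),
          (∀ s ∈ S, ((U : Set (UpperSet X)) ∩ (s : Set (UpperSet X))).Nonempty) ∧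
          (∀ u ∈ U, ((u : Set X) ∩ (T : Set X)).Nonempty)} := by
  have factor (T : LowerSet X) :
      T ∈ distLaw (DnMap UpMul S) ↔ ∃ U ∈ distLaw S, T ∈ distLaw U := by
    rw [exists_mem_distLaw_mem_distLaw_iff, upperSetsMeeting_mem_distLaw, mem_distLaw_dnMap_upMul]
  refine ⟨SetLike.ext fun T => (factor T).trans mem_upMul_upMap.symm,
    Set.ext fun _ => mem_distLaw_dnMap_upMul, Set.ext fun T => (factor T).trans ?_⟩
  refine exists_congr fun U => and_congr_left' (forall₂_congr fun s _ => ?_)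
  rw [Set.inter_comm]
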